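/- Let s, r ≥ 2 be integers. Then: (i) if M is an integer such that every 2-coloring of the 2-chains of the Boolean lattice B_M contains an (s+r)-cap in color 1 or an r-cup in color 2, then every 2-coloring of the 2-chains of B_M contains an s-diamond in color 1 or an r-cup in color 2 (so BR^2(⋄_s, ∨_r) ≤ BR^2(∧_{s+r}, ∨_r)); and (ii) for N = ⌈log_{3/2}(2r + s − 1)⌉, every 2-coloring of the 2-chains of B_N contains an s-diamond in color 1 or an r-cup in color 2 (so BR^2(⋄_s, ∨_r) ≤ ⌈log_{3/2}(2r + s − 1)⌉). -/

import Mathlib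

/-!
For (i), take a colour-`0` cap with top `Y` and bottoms `X₀, …, X_{s+r-1}`. All but at most one
`X_k` lie strictly above `∅`, so either `s` of the chains `∅ < X_k` have colour `0`, giving the
diamond `∅ < X_k < Y`, or `r` of them have colour `1`, giving a cup at `∅`.

For (ii), count chains: without a colour-`0` `(a+1)`-cap and a colour-`1` `(b+1)`-cup, every set
is the top of at most `a` colour-`0` chains and the bottom of at most `b` colour-`1` chains, so
`B_N` has at most `(a+b)·2^N` chains, while it has `3^N - 2^N`. The choice of `N` gives
`(2r+s-1)·2^N < 3^N` (strictly, by parity), and `a = s+r-1`, `b = r-1` yields an `(s+r)`-cap,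
which (i) turns into a diamond or a cup.
-/

/-- An `r`-cup in color `i` for a coloring `c` of the 2-chains of a poset `Q`. -/
def IsCup {Q : Type*} [Preorder Q] {κ : Type*} (c : Q → Q → κ) (i : κ) (r : ℕ) : Prop :=
  ∃ (X : Q) (Y : Fin r → Q),
    Function.Injective Y ∧ ∀ k, X < Y k ∧ c X (Y k) = i

/-- An `s`-cap in color `i` for a coloring `c` of the 2-chains of a poset `Q`. -/
def IsCap {Q : Type*} [Preorder Q] {κ : Type*} (c : Q → Q → κ) (i : κ) (s : ℕ) : Prop :=
  ∃ (Y : Q) (X : Fin s → Q),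
    Function.Injective X ∧ ∀ k, X k < Y ∧ c (X k) Y = i

/-- An `s`-diamond in color `i` for a coloring `c` of the 2-chains of a poset `Q`. -/
def IsDiamond {Q : Type*} [Preorder Q] {κ : Type*} (c : Q → Q → κ) (i : κ) (s : ℕ) : Prop :=
  ∃ (x z : Q) (y : Fin s → Q),
    Function.Injective y ∧
    ∀ k, x < y k ∧ y k < z ∧ c x (y k) = i ∧ c (y k) z = i

open Finset

theorem Finset.exists_injective_fin_of_le_card {α : Type*} {s : Finset α} {n : ℕ} (h : n ≤ #s) :
    ∃ f : Fin n → α, Function.Injective f ∧ ∀ k, f k ∈ s := by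
  obtain ⟨g⟩ := Function.Embedding.nonempty_of_card_le (α := Fin n) (β := s) (by simpa using h)
  exact ⟨Subtype.val ∘ g, Subtype.val_injective.comp g.injective, fun k => (g k).2⟩

theorem Finset.card_filter_eq_zero_add_card_filter_eq_one {α : Type*} (s : Finset α)
    (f : α → Fin 2) : #{x ∈ s | f x = 0} + #{x ∈ s | f x = 1} = #s := by
  simp_rw [show ∀ x : Fin 2, x = 1 ↔ ¬x = 0 by decide]
  exact card_filter_add_card_filter_not _

theorem Finset.sum_card_ssubsets_add_two_pow (α : Type*) [Fintype α] [DecidableEq α] :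
    ∑ B : Finset α, #{A | A < B} + 2 ^ Fintype.card α = 3 ^ Fintype.card α := by
  have hIic : ∀ B : Finset α, #{A | A < B} + 1 = 2 ^ #B := fun B => by
    rw [filter_gt_eq_Iio, card_Iio_finset, Nat.sub_add_cancel Nat.one_le_two_pow]
  calc ∑ B : Finset α, #{A | A < B} + 2 ^ Fintype.card α
      = ∑ B ∈ (univ : Finset α).powerset, 2 ^ #B * 1 ^ (#(univ : Finset α) - #B) := by
        simp [← hIic, sum_add_distrib, Fintype.card_finset]
    _ = 3 ^ Fintype.card α := by rw [sum_pow_mul_eq_add_pow, card_univ]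

section Coloring

variable {Q κ : Type*} {c : Q → Q → κ} {i : κ}

theorem isCap_of_le_card [Preorder Q] [Fintype Q] [DecidableLT Q] [DecidableEq κ] {s : ℕ} {Y : Q}
    (h : s ≤ #{X | X < Y ∧ c X Y = i}) : IsCap c i s := by
  obtain ⟨f, hf, hmem⟩ := exists_injective_fin_of_le_card h
  exact ⟨Y, f, hf, fun k => by simpa using hmem k⟩

theorem isCup_of_le_card [Preorder Q] [Fintype Q] [DecidableLT Q] [DecidableEq κ] {r : ℕ} {X : Q}
    (h : r ≤ #{Y | X < Y ∧ c X Y = i}) : IsCup c i r := by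
  obtain ⟨f, hf, hmem⟩ := exists_injective_fin_of_le_card h
  exact ⟨X, f, hf, fun k => by simpa using hmem k⟩

end Coloring

section TwoColorings

variable {Q : Type*} {c : Q → Q → Fin 2}

theorem isCap_or_isCup_of_mul_card_lt [Preorder Q] [Fintype Q] [DecidableLT Q] {a b : ℕ}
    (h : (a + b) * Fintype.card Q < ∑ Y : Q, #{X | X < Y}) :
    IsCap c 0 (a + 1) ∨ IsCup c 1 (b + 1) := by
  by_contra! ⟨hcap, hcup⟩
  have hcap' : ∀ Y, #{X | X < Y ∧ c X Y = 0} ≤ a := fun Y =>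
    not_lt.1 fun h => hcap (isCap_of_le_card h)
  have hcup' : ∀ X, #{Y | X < Y ∧ c X Y = 1} ≤ b := fun X =>
    not_lt.1 fun h => hcup (isCup_of_le_card h)
  have hsplit : ∑ Y : Q, #{X | X < Y} =
      ∑ Y, #{X | X < Y ∧ c X Y = 0} + ∑ X, #{Y | X < Y ∧ c X Y = 1} := by
    have hswap : ∑ X, #{Y | X < Y ∧ c X Y = 1} = ∑ Y, #{X | X < Y ∧ c X Y = 1} := by
      simp only [card_filter]
      exact sum_comm
    rw [hswap, ← sum_add_distrib]
    refine sum_congr rfl fun Y _ => ?_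
    rw [← card_filter_eq_zero_add_card_filter_eq_one _ (c · Y), filter_filter, filter_filter]
  have hbound : ∑ Y : Q, #{X | X < Y} ≤ (a + b) * Fintype.card Q := calc
    ∑ Y : Q, #{X | X < Y} = ∑ Y, #{X | X < Y ∧ c X Y = 0} + ∑ X, #{Y | X < Y ∧ c X Y = 1} := hsplit
    _ ≤ ∑ _Y : Q, a + ∑ _X : Q, b :=
      add_le_add (sum_le_sum fun Y _ => hcap' Y) (sum_le_sum fun X _ => hcup' X)
    _ = (a + b) * Fintype.card Q := by simp only [sum_const, card_univ, smul_eq_mul]; ring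
  omega

theorem IsCap.isDiamond_or_isCup [PartialOrder Q] [OrderBot Q] {s r : ℕ}
    (h : IsCap c 0 (s + r)) : IsDiamond c 0 s ∨ IsCup c 1 r := by
  classical
  obtain ⟨Y, X, hX, hXY⟩ := h
  have habove : s + r ≤ #{k | X k ≠ ⊥} + 1 := by
    have hbot : #{k | X k = ⊥} ≤ 1 := card_le_one.2 fun i hi j hj => hX (by simp_all)
    have := card_filter_add_card_filter_not (s := univ) (fun k => X k = ⊥)
    simp only [card_univ, Fintype.card_fin, ← ne_eq] at this
    omega
  set above : Finset (Fin (s + r)) := {k | X k ≠ ⊥}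
  have hsplit := card_filter_eq_zero_add_card_filter_eq_one above (fun k => c ⊥ (X k))
  by_cases hs : s ≤ #{k ∈ above | c ⊥ (X k) = 0}
  · obtain ⟨f, hf, hmem⟩ := exists_injective_fin_of_le_card hs
    refine .inl ⟨⊥, Y, X ∘ f, hX.comp hf, fun k => ?_⟩
    have hk := hmem k
    simp only [above, mem_filter, mem_univ, true_and] at hk
    exact ⟨bot_lt_iff_ne_bot.2 hk.1, (hXY _).1, hk.2, (hXY _).2⟩
  · obtain ⟨f, hf, hmem⟩ :=
      exists_injective_fin_of_le_card (show r ≤ #{k ∈ above | c ⊥ (X k) = 1} by omega)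
    refine .inr ⟨⊥, X ∘ f, hX.comp hf, fun k => ?_⟩
    have hk := hmem k
    simp only [above, mem_filter, mem_univ, true_and] at hk
    exact ⟨bot_lt_iff_ne_bot.2 hk.1, hk.2⟩

theorem isCap_or_isCup_of_mul_two_pow_lt {α : Type*} [Fintype α] [DecidableEq α]
    {c : Finset α → Finset α → Fin 2} {a b : ℕ}
    (h : (a + b + 1) * 2 ^ Fintype.card α < 3 ^ Fintype.card α) :
    IsCap c 0 (a + 1) ∨ IsCup c 1 (b + 1) := by
  refine isCap_or_isCup_of_mul_card_lt ?_
  have := sum_card_ssubsets_add_two_pow α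
  rw [Fintype.card_finset]
  linarith

end TwoColorings

theorem Nat.mul_two_pow_lt_three_pow_of_logb_le {m N : ℕ} (hm : 2 ≤ m) (hN : Real.logb (3 / 2) m ≤ N) :
    m * 2 ^ N < 3 ^ N := by
  have hpow : (m : ℝ) ≤ (3 / 2) ^ N := by
    rwa [Real.logb_le_iff_le_rpow (by norm_num) (by positivity), Real.rpow_natCast] at hN
  have hle : m * 2 ^ N ≤ 3 ^ N := by
    rw [div_pow, le_div_iff₀ (by positivity)] at hpow
    exact_mod_cast hpow
  have hN0 : N ≠ 0 := by
    rintro rfl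
    norm_num at hpow
    omega
  refine hle.lt_of_ne fun heq => ?_
  have heven : Even (3 ^ N) := heq ▸ (Nat.even_pow.2 ⟨even_two, hN0⟩).mul_left m
  exact Nat.not_even_iff_odd.2 (Odd.pow (by decide)) heven

theorem boolean_ramsey_diamond_vs_cup_general
    (s r : ℕ) (hr : 2 ≤ r) :
    (∀ M : ℕ,
      (∀ c : Finset (Fin M) → Finset (Fin M) → Fin 2,
        IsCap c 0 (s + r) ∨ IsCup c 1 r) →
      (∀ c : Finset (Fin M) → Finset (Fin M) → Fin 2,
        IsDiamond c 0 s ∨ IsCup c 1 r)) ∧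
    (∀ N : ℕ, (N : ℤ) = ⌈Real.logb (3 / 2) (2 * (r : ℝ) + (s : ℝ) - 1)⌉ →
      ∀ c : Finset (Fin N) → Finset (Fin N) → Fin 2,
        IsDiamond c 0 s ∨ IsCup c 1 r) := by
  refine ⟨fun M hM c => (hM c).elim IsCap.isDiamond_or_isCup .inr, fun N hN c => ?_⟩
  have hlog : Real.logb (3 / 2) ((2 * r + s - 1 : ℕ) : ℝ) ≤ N := by
    rw [Nat.cast_sub (by omega)]
    push_cast
    exact_mod_cast hN ▸ Int.le_ceil _
  have hlt := Nat.mul_two_pow_lt_three_pow_of_logb_le (by omega) hlog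
  have hcapcup := isCap_or_isCup_of_mul_two_pow_lt (c := c) (a := s + r - 1) (b := r - 1)
    (by rwa [Fintype.card_fin, show s + r - 1 + (r - 1) + 1 = 2 * r + s - 1 by omega])
  rw [Nat.sub_add_cancel (by omega), Nat.sub_add_cancel (by omega)] at hcapcup
  exact hcapcup.elim IsCap.isDiamond_or_isCup .inr

/-- for `s, r ≥ 2`:
(i) `BR^2(⋄_s, ∨_r) ≤ BR^2(∧_{s+r}, ∨_r)`: if every 2-coloring of the 2-chains of
`B_M` contains an `(s+r)`-cap in color `0` or an `r`-cup in color `1`, then every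
2-coloring of the 2-chains of `B_M` contains an `s`-diamond in color `0` or an
`r`-cup in color `1`;
(ii) for `N = ⌈log_{3/2}(2r + s − 1)⌉`, every 2-coloring of the 2-chains of `B_N`
contains an `s`-diamond in color `0` or an `r`-cup in color `1`. -/
theorem boolean_ramsey_diamond_vs_cup
    (s r : ℕ) (hs : 2 ≤ s) (hr : 2 ≤ r) :
    (∀ M : ℕ,
      (∀ c : Finset (Fin M) → Finset (Fin M) → Fin 2,
        IsCap c 0 (s + r) ∨ IsCup c 1 r) →
      (∀ c : Finset (Fin M) → Finset (Fin M) → Fin 2,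
        IsDiamond c 0 s ∨ IsCup c 1 r)) ∧
    (∀ N : ℕ, (N : ℤ) = ⌈Real.logb (3 / 2) (2 * (r : ℝ) + (s : ℝ) - 1)⌉ →
      ∀ c : Finset (Fin N) → Finset (Fin N) → Fin 2,
        IsDiamond c 0 s ∨ IsCup c 1 r) :=
  boolean_ramsey_diamond_vs_cup_general s r hr
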